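/- Assume g(A N, ξ) = 0, set β := g(A ξ, ξ), let α ∈ ℝ, and let S : T → T be a g-symmetric real-linear map with Sξ = αξ on T := {Y ∈ V : g(Y,N) = 0}. Suppose that the Hopf identity 2g(SφS X, Y) - α·g(φS X + Sφ X, Y) - 2g(φ X, Y) + 2g(X, A N)g(Y, A ξ) - 2g(Y, A N)g(X, A ξ) - 2g(X, A N)·β·η(Y) + 2g(Y, A N)·β·η(X) = 0 holds for all X, Y ∈ T, where η(Y) := g(Y,ξ) and φ(X) := J X - g(J X,N)N, and suppose moreover that S(A ξ) = αβ·ξ. Then α·S(φ(A ξ)) = -2β²·φ(A ξ). -/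

import Mathlib

noncomputable section

variable {V : Type*}

/-- The real inner product `g(x,y) = Re⟨x,y⟩` induced by the Hermitian inner product. -/
def g [NormedAddCommGroup V] [InnerProductSpace ℂ V] (x y : V) : ℝ := (inner ℂ x y : ℂ).re

/-- The tangential part of `J X` on the hypersurface tangent space. -/
def phi [NormedAddCommGroup V] [InnerProductSpace ℂ V] (N X : V) : V :=
  Complex.I • X - g (Complex.I • X) N • N

/-!
Put `X = Aξ` in the Hopf identity. Since `S(Aξ)` is a multiple of `ξ` and `φξ = 0`, the two terms
quadratic in `S` disappear; `Aξ` is a unit tangent vector with `g(Aξ, AN) = 0` and `g(Aξ, ξ) = β`,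
and on tangent vectors `g(Y, AN) = -g(φ(Aξ), Y)` because `Aξ = J(AN)`. What is left says that
`α S(φ(Aξ)) + 2β² φ(Aξ)` is orthogonal to every tangent vector; being tangent itself, it vanishes.
-/

section Tangent

variable [NormedAddCommGroup V] [InnerProductSpace ℂ V]

open Complex

lemma g_comm (x y : V) : g x y = g y x := by
  unfold g; rw [← inner_conj_symm y x]; exact conj_re _

lemma g_add_left (x y z : V) : g (x + y) z = g x z + g y z := by
  simp [g]

lemma g_zero_left (y : V) : g 0 y = 0 := by
  simp [g]

lemma g_neg_left (x y : V) : g (-x) y = -g x y := by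
  simp [g, inner_neg_left]

lemma g_neg_right (x y : V) : g x (-y) = -g x y := by
  simp [g, inner_neg_right]

lemma g_sub_left (x y z : V) : g (x - y) z = g x z - g y z := by
  simp [g]

lemma g_smul_left (r : ℝ) (x y : V) : g (r • x) y = r * g x y := by
  simp [g, ← coe_smul, mul_comm]

lemma g_self (x : V) : g x x = ‖x‖ ^ 2 :=
  inner_self_eq_norm_sq (𝕜 := ℂ) x

lemma g_I_smul_left (x y : V) : g (I • x) y = -g x (I • y) := by
  simp [g]

lemma g_I_smul_self (x : V) : g (I • x) x = 0 := by
  simp [g, ← ofReal_pow]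

lemma g_map_map_of_inner_map_map {A : V →ₗ[ℝ] V}
    (hA : ∀ x y, (inner ℂ (A x) (A y) : ℂ) = inner ℂ y x) (x y : V) :
    g (A x) (A y) = g x y := by
  rw [g, hA, ← g, g_comm]

lemma eq_zero_of_g_eq_zero_on_tangent {N W : V} (hW : g W N = 0)
    (h : ∀ Y, g Y N = 0 → g W Y = 0) : W = 0 := by
  have := h W hW
  rw [g_self] at this
  exact norm_eq_zero.mp (pow_eq_zero_iff two_ne_zero |>.mp this)

lemma phi_smul (N : V) (r : ℝ) (X : V) : phi N (r • X) = r • phi N X := by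
  rw [phi, phi, smul_comm, g_smul_left, smul_sub, smul_smul]

lemma phi_I_smul (N X : V) : phi N (I • X) = -X + g X N • N := by
  rw [phi, smul_smul, I_mul_I, neg_one_smul, g_neg_left, neg_smul, sub_neg_eq_add]

lemma g_phi_left_self {N : V} (hN : ‖N‖ = 1) (X : V) : g (phi N X) N = 0 := by
  rw [phi, g_sub_left, g_smul_left, g_self, hN]
  ring

lemma phi_neg_I_smul_self {N : V} (hN : ‖N‖ = 1) : phi N (-(I • N)) = 0 := by
  rw [← smul_neg, phi_I_smul, neg_neg, g_neg_left, g_self, hN]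
  simp

lemma g_phi_I_smul_of_tangent {N Y : V} (X : V) (hY : g Y N = 0) :
    g (phi N (I • X)) Y = -g X Y := by
  rw [phi_I_smul, g_add_left, g_neg_left, g_smul_left, g_comm N, hY]
  ring

end Tangent

theorem stmt_11_general [NormedAddCommGroup V] [InnerProductSpace ℂ V]
    (A : V →ₗ[ℝ] V)
    (hA_antiJ : ∀ x, A (Complex.I • x) = -(Complex.I • A x))
    (hA_herm : ∀ x y, (inner ℂ (A x) (A y) : ℂ) = inner ℂ y x)
    (N : V) (hN : ‖N‖ = 1)
    (ξ : V) (hξ : ξ = -(Complex.I • N))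
    (hANξ : g (A N) ξ = 0)
    (β : ℝ) (hβ : β = g (A ξ) ξ)
    (α : ℝ) (S : V →ₗ[ℝ] V)
    (hS_tan : ∀ Y : V, g Y N = 0 → g (S Y) N = 0)
    (hHopf : ∀ X Y : V, g X N = 0 → g Y N = 0 →
      2 * g (S (phi N (S X))) Y - α * (g (phi N (S X)) Y + g (S (phi N X)) Y)
        - 2 * g (phi N X) Y + 2 * g X (A N) * g Y (A ξ) - 2 * g Y (A N) * g X (A ξ)
        - 2 * g X (A N) * β * g Y ξ + 2 * g Y (A N) * β * g X ξ = 0)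
    (hSAξ : S (A ξ) = (α * β) • ξ) :
    α • S (phi N (A ξ)) = (-(2 * β ^ 2)) • phi N (A ξ) := by
  have hAξ : A ξ = Complex.I • A N := by rw [hξ, map_neg, hA_antiJ, neg_neg]
  have hAξ_tan : g (A ξ) N = 0 := by
    rw [hAξ, g_I_smul_left, ← g_neg_right, ← hξ, hANξ]
  have hAξ_AN : g (A ξ) (A N) = 0 := by
    rw [g_map_map_of_inner_map_map hA_herm, hξ, g_neg_left, g_I_smul_self, neg_zero]
  have hAξ_unit : g (A ξ) (A ξ) = 1 := by
    rw [g_map_map_of_inner_map_map hA_herm, g_self, hξ, norm_neg, norm_smul, Complex.norm_I, hN]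
    norm_num
  have hφSAξ : phi N (S (A ξ)) = 0 := by
    rw [hSAξ, phi_smul, hξ, phi_neg_I_smul_self hN, smul_zero]
  have hφAξ_tan : g (phi N (A ξ)) N = 0 := g_phi_left_self hN _
  rw [← sub_eq_zero]
  refine eq_zero_of_g_eq_zero_on_tangent (N := N) ?_ fun Y hY => ?_
  · rw [g_sub_left, g_smul_left, g_smul_left, hS_tan _ hφAξ_tan, hφAξ_tan]
    ring
  · have hY_AN : g Y (A N) = -g (phi N (A ξ)) Y := by
      rw [hAξ, g_phi_I_smul_of_tangent _ hY, neg_neg, g_comm]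
    have h := hHopf (A ξ) Y hAξ_tan hY
    rw [hφSAξ, map_zero, g_zero_left, hAξ_AN, hAξ_unit, ← hβ, hY_AN] at h
    rw [g_sub_left, g_smul_left, g_smul_left]
    linear_combination -h

/-- If the Hopf identity (3.3) holds for the `g`-symmetric shape operator `S` with
`Sξ = αξ`, `g(AN,ξ) = 0`, `β = g(Aξ,ξ)`, and moreover `S(Aξ) = αβ·ξ`, then
`α·S(φ(Aξ)) = -2β²·φ(Aξ)`. -/
theorem stmt_11 [NormedAddCommGroup V] [InnerProductSpace ℂ V]
    (A : V →ₗ[ℝ] V)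
    (hA_invol : ∀ x, A (A x) = x)
    (hA_antiJ : ∀ x, A (Complex.I • x) = -(Complex.I • A x))
    (hA_herm : ∀ x y, (inner ℂ (A x) (A y) : ℂ) = inner ℂ y x)
    (N : V) (hN : ‖N‖ = 1)
    (ξ : V) (hξ : ξ = -(Complex.I • N))
    (hANξ : g (A N) ξ = 0)
    (β : ℝ) (hβ : β = g (A ξ) ξ)
    (α : ℝ) (S : V →ₗ[ℝ] V)
    (hS_tan : ∀ Y : V, g Y N = 0 → g (S Y) N = 0)
    (hS_sym : ∀ X Y : V, g X N = 0 → g Y N = 0 → g (S X) Y = g X (S Y))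
    (hSξ : S ξ = α • ξ)
    (hHopf : ∀ X Y : V, g X N = 0 → g Y N = 0 →
      2 * g (S (phi N (S X))) Y - α * (g (phi N (S X)) Y + g (S (phi N X)) Y)
        - 2 * g (phi N X) Y + 2 * g X (A N) * g Y (A ξ) - 2 * g Y (A N) * g X (A ξ)
        - 2 * g X (A N) * β * g Y ξ + 2 * g Y (A N) * β * g X ξ = 0)
    (hSAξ : S (A ξ) = (α * β) • ξ) :
    α • S (phi N (A ξ)) = (-(2 * β ^ 2)) • phi N (A ξ) :=
  stmt_11_general A hA_antiJ hA_herm N hN ξ hξ hANξ β hβ α S hS_tan hHopf hSAξ
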